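/- arXiv:0904.3759 — 5 statements merged into one kernel-verified Lean document; each statement's English description precedes it below -/
import Mathlib

section
/- Let n ≥ 11 be an integer and let p ≥ p_JL = (n−2√(n−1))/(n−4−2√(n−1)). Set λ(n,p) = (2p/(p−1))(n−2−2/(p−1)) and σ(n,p) = (n−2)/2 − √((n−2)²/4 − λ(n,p)). Then 2/(p−1) < σ(n,p) and 2σ(n,p) < n. -/
open Real

/-- For `n ≥ 11` and `p ≥ p_JL`, the exponent
`σ(n,p) = (n−2)/2 − √((n−2)²/4 − λ(n,p))` satisfies `2/(p−1) < σ(n,p)` and `2σ(n,p) < n`. -/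
theorem sigma_bounds (n : ℕ) (hn : 11 ≤ n) (p : ℝ)
    (hp : ((n : ℝ) - 2 * Real.sqrt ((n : ℝ) - 1)) /
      ((n : ℝ) - 4 - 2 * Real.sqrt ((n : ℝ) - 1)) ≤ p)
    (lam σ : ℝ)
    (hlam : lam = (2 * p / (p - 1)) * ((n : ℝ) - 2 - 2 / (p - 1)))
    (hσ : σ = ((n : ℝ) - 2) / 2 - Real.sqrt (((n : ℝ) - 2) ^ 2 / 4 - lam)) :
    2 / (p - 1) < σ ∧ 2 * σ < (n : ℝ) := by
  have hn' : (11:ℝ) ≤ (n:ℝ) := by exact_mod_cast hn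
  set s := Real.sqrt ((n : ℝ) - 1) with hs
  have hs0 : 0 ≤ s := Real.sqrt_nonneg _
  have hs2 : s ^ 2 = (n:ℝ) - 1 := Real.sq_sqrt (by linarith)
  have hsl : 2 * s < (n:ℝ) - 4 := by
    have h1 : s < ((n:ℝ) - 4) / 2 := by
      rw [hs, Real.sqrt_lt' (by linarith)]
      nlinarith
    linarith
  have hd : 0 < (n:ℝ) - 4 - 2 * s := by linarith
  have hpJL : 1 + 4 / ((n:ℝ) - 4 - 2 * s) ≤ p := by
    have heq : ((n:ℝ) - 2 * s) / ((n:ℝ) - 4 - 2 * s)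
        = 1 + 4 / ((n:ℝ) - 4 - 2 * s) := by
      field_simp
      ring
    rw [← heq]; exact hp
  have hdp : 0 < 4 / ((n:ℝ) - 4 - 2 * s) := by positivity
  have hp1 : 1 < p := by linarith
  have hp1' : 0 < p - 1 := by linarith
  set t := 2 / (p - 1) with ht
  have ht0 : 0 < t := by positivity
  have h4d : 4 / ((n:ℝ) - 4 - 2 * s) ≤ p - 1 := by linarith
  have h4 : 4 ≤ (p - 1) * ((n:ℝ) - 4 - 2 * s) := by
    rw [div_le_iff₀ hd] at h4d
    linarith
  have htd : t ≤ ((n:ℝ) - 4 - 2 * s) / 2 := by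
    rw [ht, div_le_div_iff₀ hp1' two_pos]
    linarith
  have htm : t < ((n:ℝ) - 2) / 2 := by linarith
  have h2p : 2 * p / (p - 1) = 2 + t := by
    rw [ht]
    have hne : p - 1 ≠ 0 := ne_of_gt hp1'
    field_simp
    ring
  have hlam' : lam = (2 + t) * ((n:ℝ) - 2 - t) := by
    rw [hlam, h2p]
  have hD : ((n:ℝ) - 2) ^ 2 / 4 - lam < (((n:ℝ) - 2) / 2 - t) ^ 2 := by
    rw [hlam']
    nlinarith
  have hsqrt : Real.sqrt (((n:ℝ) - 2) ^ 2 / 4 - lam) < ((n:ℝ) - 2) / 2 - t := by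
    rw [Real.sqrt_lt' (by linarith)]
    exact hD
  have hsq0 : 0 ≤ Real.sqrt (((n:ℝ) - 2) ^ 2 / 4 - lam) := Real.sqrt_nonneg _
  constructor
  · rw [hσ]; linarith
  · rw [hσ]; linarith
end

section
/- Let n ≥ 1 be an integer and let σ, ℓ, c be reals with σ ≥ 0, ℓ ≥ 0, σ + ℓ ≠ n and c > 0. Then there exists a constant C > 0 such that for all t ≥ 1 and all x ∈ ℝⁿ, t^{σ/2} ∫_{1 ≤ |y| ≤ √t} G(x−y, ct)·|y|^{−σ−ℓ} dy ≤ C·(t^{−ℓ/2} + t^{−(n−σ)/2}). -/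
open Real MeasureTheory

/-- The Gauss–Weierstrass heat kernel on `ℝⁿ`. -/
noncomputable def heatKernel (n : ℕ) (x : EuclideanSpace ℝ (Fin n)) (t : ℝ) : ℝ :=
  (4 * Real.pi * t) ^ (-(n : ℝ) / 2) * Real.exp (-‖x‖ ^ 2 / (4 * t))

open Set Metric

lemma radial_integral_bound (n : ℕ) (hn : 1 ≤ n) (p : ℝ) (hp : 0 ≤ p) (hpn : p ≠ (n : ℝ))
    (t : ℝ) (ht : 1 ≤ t) :
    ∫ y in {y : EuclideanSpace ℝ (Fin n) | 1 ≤ ‖y‖ ∧ ‖y‖ ≤ Real.sqrt t}, ‖y‖ ^ (-p) ≤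
      ((n : ℝ) * (volume (ball (0 : EuclideanSpace ℝ (Fin n)) 1)).toReal / |(n : ℝ) - p|) *
        (t ^ (((n : ℝ) - p) / 2) + 1) := by
  haveI : Nonempty (Fin n) := ⟨⟨0, hn⟩⟩
  set E := EuclideanSpace ℝ (Fin n)
  set q : ℝ := (n : ℝ) - 1 - p with hq
  have h1t : (1 : ℝ) ≤ Real.sqrt t := Real.one_le_sqrt.2 ht
  have hA : (0 : ℝ) ≤ (n : ℝ) * (volume (ball (0 : E) 1)).toReal := by positivity
  have key := MeasureTheory.integral_fun_norm_addHaar (volume : Measure E)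
    ((Set.Icc (1:ℝ) (Real.sqrt t)).indicator (fun r => r ^ (-p)))
  -- LHS of key is our integral
  have hL : (∫ x : E, (Set.Icc (1:ℝ) (Real.sqrt t)).indicator (fun r => r ^ (-p)) ‖x‖)
      = ∫ y in {y : E | 1 ≤ ‖y‖ ∧ ‖y‖ ≤ Real.sqrt t}, ‖y‖ ^ (-p) := by
    have : ∀ x : E, (Set.Icc (1:ℝ) (Real.sqrt t)).indicator (fun r => r ^ (-p)) ‖x‖
        = ((fun y : E => ‖y‖) ⁻¹' Set.Icc (1:ℝ) (Real.sqrt t)).indicator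
            (fun y : E => ‖y‖ ^ (-p)) x := fun x =>
      (Set.indicator_comp_right (fun y : E => ‖y‖)
        (s := Set.Icc (1:ℝ) (Real.sqrt t)) (g := fun r => r ^ (-p))).symm
    rw [integral_congr_ae (Filter.Eventually.of_forall this),
      MeasureTheory.integral_indicator (by
        exact (isClosed_Icc.preimage continuous_norm).measurableSet)]
    rfl
  rw [hL] at key
  -- compute the 1D integral
  rw [finrank_euclideanSpace_fin] at key
  have hR : (∫ r in Set.Ioi (0:ℝ), r ^ (n - 1) •
      (Set.Icc (1:ℝ) (Real.sqrt t)).indicator (fun r => r ^ (-p)) r)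
      = (t ^ (((n : ℝ) - p) / 2) - 1) / ((n : ℝ) - p) := by
    have h1 : ∀ r : ℝ, r ^ (n - 1) •
        (Set.Icc (1:ℝ) (Real.sqrt t)).indicator (fun r => r ^ (-p)) r
        = (Set.Icc (1:ℝ) (Real.sqrt t)).indicator
            (fun r => r ^ (n-1) * r ^ (-p)) r := fun r => by
      rw [smul_eq_mul, Set.indicator_mul_right]
    have hsub : Set.Icc (1:ℝ) (Real.sqrt t) ⊆ Set.Ioi (0:ℝ) := fun r hr =>
      lt_of_lt_of_le one_pos hr.1
    rw [integral_congr_ae (Filter.Eventually.of_forall fun r => h1 r),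
      MeasureTheory.setIntegral_indicator measurableSet_Icc,
      Set.inter_eq_self_of_subset_right hsub,
      MeasureTheory.setIntegral_congr_fun measurableSet_Icc
        (g := fun r : ℝ => r ^ q) (fun r hr => by
          have hr0 : (0:ℝ) < r := lt_of_lt_of_le one_pos hr.1
          rw [← Real.rpow_natCast r (n-1), ← Real.rpow_add hr0]
          congr 1
          push_cast [Nat.cast_sub hn]
          ring),
      MeasureTheory.integral_Icc_eq_integral_Ioc,
      ← intervalIntegral.integral_of_le h1t,
      integral_rpow (Or.inr ⟨by simp [hq]; intro h; apply hpn; linarith, by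
        rw [Set.uIcc_of_le h1t, Set.mem_Icc]; push_neg; intro h; linarith⟩)]
    have hq1 : q + 1 = (n : ℝ) - p := by simp [hq]; ring
    rw [hq1, Real.one_rpow, Real.sqrt_eq_rpow, ← Real.rpow_mul (by linarith)]
    congr 2
    ring
  rw [hR, nsmul_eq_mul, smul_eq_mul] at key
  have hd : ((n:ℝ) - p) ≠ 0 := sub_ne_zero.2 (fun h => hpn h.symm)
  have habs : (0:ℝ) < |(n:ℝ) - p| := abs_pos.2 hd
  have hV : (0:ℝ) ≤ (volume (ball (0 : E) 1)).toReal := ENNReal.toReal_nonneg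
  have hmain : (t ^ (((n : ℝ) - p) / 2) - 1) / ((n : ℝ) - p)
      ≤ (t ^ (((n : ℝ) - p) / 2) + 1) / |(n:ℝ) - p| := by
    calc (t ^ (((n : ℝ) - p) / 2) - 1) / ((n : ℝ) - p)
      ≤ |(t ^ (((n : ℝ) - p) / 2) - 1) / ((n : ℝ) - p)| := le_abs_self _
    _ = |t ^ (((n : ℝ) - p) / 2) - 1| / |(n:ℝ) - p| := abs_div _ _
    _ ≤ (t ^ (((n : ℝ) - p) / 2) + 1) / |(n:ℝ) - p| := by
        gcongr
        have h0 : (0:ℝ) ≤ t ^ (((n : ℝ) - p) / 2) := Real.rpow_nonneg (by linarith) _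
        exact abs_le.2 ⟨by nlinarith, by nlinarith⟩
  rw [key]
  calc (n:ℝ) * ((volume (ball (0 : E) 1)).toReal *
        ((t ^ (((n : ℝ) - p) / 2) - 1) / ((n : ℝ) - p)))
      ≤ (n:ℝ) * ((volume (ball (0 : E) 1)).toReal *
        ((t ^ (((n : ℝ) - p) / 2) + 1) / |(n:ℝ) - p|)) := by
        apply mul_le_mul_of_nonneg_left (mul_le_mul_of_nonneg_left hmain hV)
          (Nat.cast_nonneg n)
    _ = (n : ℝ) * (volume (ball (0 : E) 1)).toReal / |(n : ℝ) - p| *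
        (t ^ (((n : ℝ) - p) / 2) + 1) := by ring


/-- For `σ, ℓ ≥ 0` with `σ + ℓ ≠ n` and `c > 0` there is `C > 0` such that for all
`t ≥ 1` and `x`, `t^{σ/2} ∫_{1≤|y|≤√t} G(x−y, ct)·|y|^{−σ−ℓ} dy ≤ C·(t^{−ℓ/2} + t^{−(n−σ)/2})`. -/
theorem integral_annulus_bound (n : ℕ) (hn : 1 ≤ n) (σ ℓ c : ℝ)
    (hσ : 0 ≤ σ) (hℓ : 0 ≤ ℓ) (hσℓ : σ + ℓ ≠ (n : ℝ)) (hc : 0 < c) :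
    ∃ C > 0, ∀ t ≥ (1 : ℝ), ∀ x : EuclideanSpace ℝ (Fin n),
      t ^ (σ / 2) *
        ∫ y in {y : EuclideanSpace ℝ (Fin n) | 1 ≤ ‖y‖ ∧ ‖y‖ ≤ Real.sqrt t},
          heatKernel n (x - y) (c * t) * ‖y‖ ^ (-σ - ℓ) ≤
        C * (t ^ (-ℓ / 2) + t ^ (-((n : ℝ) - σ) / 2)) := by
  haveI : Nonempty (Fin n) := ⟨⟨0, hn⟩⟩
  set E := EuclideanSpace ℝ (Fin n)
  set p : ℝ := σ + ℓ with hpdef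
  have hpn : p ≠ (n : ℝ) := hσℓ
  set B : ℝ := (n : ℝ) * (volume (ball (0 : E) 1)).toReal / |(n : ℝ) - p| with hB
  have hBpos : 0 < B := by
    apply div_pos
    · apply mul_pos (by exact_mod_cast hn) ?_
      exact ENNReal.toReal_pos (measure_ball_pos volume 0 one_pos).ne'
        (measure_ball_lt_top).ne
    · exact abs_pos.2 (sub_ne_zero.2 fun h => hpn h.symm)
  refine ⟨(4 * Real.pi * c) ^ (-(n : ℝ) / 2) * B, by positivity, fun t ht x => ?_⟩
  have ht0 : (0 : ℝ) < t := lt_of_lt_of_le one_pos ht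
  have hct : (0 : ℝ) < c * t := mul_pos hc ht0
  have h4 : (0 : ℝ) < 4 * Real.pi * (c * t) := by positivity
  set s : Set E := {y : E | 1 ≤ ‖y‖ ∧ ‖y‖ ≤ Real.sqrt t} with hs
  -- s is compact
  have hscl : s = Metric.closedBall (0 : E) (Real.sqrt t) ∩ {y : E | 1 ≤ ‖y‖} := by
    ext y; simp [hs, Metric.mem_closedBall, dist_zero_right, and_comm]
  have hclosed1 : IsClosed {y : E | 1 ≤ ‖y‖} :=
    isClosed_le continuous_const continuous_norm
  have hcomp : IsCompact s := by
    rw [hscl]; exact (isCompact_closedBall _ _).inter_right hclosed1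
  have hsm : MeasurableSet s := by
    rw [hscl]; exact (measurableSet_closedBall.inter hclosed1.measurableSet)
  -- pointwise bound and integrability
  have hcontg : ContinuousOn (fun y : E => ‖y‖ ^ (-p)) s := by
    apply ContinuousOn.rpow_const continuous_norm.continuousOn
    intro y hy
    exact Or.inl (by have := hy.1; positivity)
  have hconth : Continuous (fun y : E => heatKernel n (x - y) (c * t)) := by
    unfold heatKernel
    fun_prop
  have hif : IntegrableOn (fun y : E => heatKernel n (x - y) (c * t) * ‖y‖ ^ (-p)) s := by
    exact (hconth.continuousOn.mul hcontg).integrableOn_compact hcomp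
  have hig : IntegrableOn
      (fun y : E => (4 * Real.pi * (c * t)) ^ (-(n : ℝ) / 2) * ‖y‖ ^ (-p)) s := by
    exact ((continuous_const.continuousOn).mul hcontg).integrableOn_compact hcomp
  have hpt : ∀ y ∈ s, heatKernel n (x - y) (c * t) * ‖y‖ ^ (-p)
      ≤ (4 * Real.pi * (c * t)) ^ (-(n : ℝ) / 2) * ‖y‖ ^ (-p) := by
    intro y hy
    apply mul_le_mul_of_nonneg_right _ (Real.rpow_nonneg (norm_nonneg _) _)
    unfold heatKernel
    nth_rewrite 2 [← mul_one ((4 * Real.pi * (c * t)) ^ (-(n : ℝ) / 2))]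
    apply mul_le_mul_of_nonneg_left _ (Real.rpow_nonneg h4.le _)
    rw [Real.exp_le_one_iff]
    apply div_nonpos_of_nonpos_of_nonneg
    · simp [sq_nonneg]
    · linarith
  -- chain
  have step1 : (∫ y in s, heatKernel n (x - y) (c * t) * ‖y‖ ^ (-p))
      ≤ (4 * Real.pi * (c * t)) ^ (-(n : ℝ) / 2) * ∫ y in s, ‖y‖ ^ (-p) := by
    rw [← MeasureTheory.integral_const_mul]
    exact MeasureTheory.setIntegral_mono_on hif hig hsm hpt
  have step2 := radial_integral_bound n hn p (by positivity) hpn t ht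
  have hM : (0:ℝ) ≤ (4 * Real.pi * (c * t)) ^ (-(n : ℝ) / 2) := Real.rpow_nonneg h4.le _
  have key : t ^ (σ / 2) * ∫ y in s, heatKernel n (x - y) (c * t) * ‖y‖ ^ (-p)
      ≤ t ^ (σ / 2) * ((4 * Real.pi * (c * t)) ^ (-(n : ℝ) / 2) *
          (B * (t ^ (((n : ℝ) - p) / 2) + 1))) := by
    apply mul_le_mul_of_nonneg_left _ (Real.rpow_nonneg ht0.le _)
    exact step1.trans (mul_le_mul_of_nonneg_left step2 hM)
  simp only [show -σ - ℓ = -p by rw [hpdef]; ring]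
  refine le_trans key (le_of_eq ?_)
  -- algebra
  have hsplit : (4 * Real.pi * (c * t)) ^ (-(n : ℝ) / 2)
      = (4 * Real.pi * c) ^ (-(n : ℝ) / 2) * t ^ (-(n : ℝ) / 2) := by
    rw [show 4 * Real.pi * (c * t) = (4 * Real.pi * c) * t by ring,
      Real.mul_rpow (by positivity) ht0.le]
  rw [hsplit]
  have hexp : ∀ a b : ℝ, t ^ a * t ^ b = t ^ (a + b) := fun a b =>
    (Real.rpow_add ht0 a b).symm
  have e1 : t ^ (σ / 2) * (t ^ (-(n:ℝ) / 2) * t ^ (((n : ℝ) - p) / 2)) = t ^ (-ℓ / 2) := by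
    rw [hexp, hexp]; congr 1; rw [hpdef]; ring
  have e2 : t ^ (σ / 2) * t ^ (-(n:ℝ) / 2) = t ^ (-((n:ℝ) - σ) / 2) := by
    rw [hexp]; congr 1; ring
  calc t ^ (σ / 2) * ((4 * Real.pi * c) ^ (-(n : ℝ) / 2) * t ^ (-(n : ℝ) / 2) *
          (B * (t ^ (((n : ℝ) - p) / 2) + 1)))
      = (4 * Real.pi * c) ^ (-(n : ℝ) / 2) * B *
          (t ^ (σ / 2) * (t ^ (-(n:ℝ) / 2) * t ^ (((n : ℝ) - p) / 2)) +
           t ^ (σ / 2) * t ^ (-(n:ℝ) / 2)) := by ring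
    _ = (4 * Real.pi * c) ^ (-(n : ℝ) / 2) * B * (t ^ (-ℓ / 2) + t ^ (-((n:ℝ) - σ) / 2)) := by
        rw [e1, e2]
end

section
/- Let n ≥ 3 be an integer, p > 1, and σ > 0 reals with σ + 2/(p−1) < n (equivalently p > 1 + 2/(n−σ)). Let K : (0,∞)×ℝⁿ×ℝⁿ → ℝ be measurable with 0 ≤ K(t,x,y) ≤ C₀·φ_σ(x,t)·φ_σ(y,t)·G(x−y, ct) for some constants C₀ > 0, c > 1, all t > 0 and all x,y ∈ ℝⁿ∖{0}, and write (T_t w)(x) = ∫_{ℝⁿ} K(t,x,y) w(y) dy. Suppose there exist b > 0 and ℓ ∈ (2/(p−1), n−σ) such that the measurable nonnegative function w₀ : ℝⁿ → ℝ satisfies w₀(x) ≤ b|x|^{−2/(p−1)} for 0 < |x| ≤ 1 and w₀(x) ≤ b|x|^{−ℓ} for |x| ≥ 1. Then there exists C > 0 such that for all t ≥ 1, sup_{x ∈ ℝⁿ∖{0}} φ_σ(x,t)^{−1}·(T_t w₀)(x) ≤ C·t^{−ℓ/2}. -/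
/-!
Bound `w₀ ≤ b |y|^{-ℓ}` everywhere and split the `y`-integral at `|y| = √t`. Inside the ball,
`φ_σ(y,t) = t^{σ/2} |y|^{-σ}` and the Gaussian is at most `(4πct)^{-n/2}`; by scaling, the integral
of `|y|^{-(σ+ℓ)}` over the ball of radius `√t` is `t^{(n-σ-ℓ)/2}` times its (finite, as `σ + ℓ < n`)
value over the unit ball, and the powers of `t` combine to `t^{-ℓ/2}`. Outside the ball,
`φ_σ(y,t) ≤ 1` and `|y|^{-ℓ} ≤ t^{-ℓ/2}`, while the Gaussian has integral one.
-/

open Real MeasureTheory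

/-- The weight `φ_σ(x,t) = (√t/|x|)^σ` for `|x| ≤ √t`, and `1` for `|x| ≥ √t`. -/
noncomputable def phiWeight (n : ℕ) (σ : ℝ) (x : EuclideanSpace ℝ (Fin n)) (t : ℝ) : ℝ :=
  if ‖x‖ ≤ Real.sqrt t then (Real.sqrt t / ‖x‖) ^ σ else 1

open Metric Module

section RadialPower

variable {E : Type*} [NormedAddCommGroup E] [NormedSpace ℝ E] [FiniteDimensional ℝ E]
  [MeasurableSpace E] [BorelSpace E] (μ : Measure E) [μ.IsAddHaarMeasure]

theorem setIntegral_ball_norm_rpow {R : ℝ} (hR : 0 < R) (a : ℝ) :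
    ∫ y in ball (0 : E) R, ‖y‖ ^ a ∂μ =
      R ^ (finrank ℝ E + a) * ∫ y in ball (0 : E) 1, ‖y‖ ^ a ∂μ := by
  have h := Measure.setIntegral_comp_smul_of_pos μ (fun y : E => ‖y‖ ^ a) (ball 0 1) hR
  simp only [smul_unitBall_of_pos hR, norm_smul, Real.norm_of_nonneg hR.le,
    Real.mul_rpow hR.le (norm_nonneg _), integral_const_mul, smul_eq_mul] at h
  rw [Real.rpow_add hR, Real.rpow_natCast, mul_assoc, h, ← mul_assoc,
    mul_inv_cancel₀ (pow_ne_zero _ hR.ne'), one_mul]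

theorem integrableOn_ball_norm_rpow_neg (hE : 0 < finrank ℝ E) {a : ℝ} (ha : a < finrank ℝ E)
    (R : ℝ) : IntegrableOn (fun y : E => ‖y‖ ^ (-a)) (ball 0 R) μ := by
  refine integrableOn_ball_of_norm_le_rpow (C := 1) hE ha (ae_of_all _ fun y => ?_)
    (measurable_norm.pow_const _).aestronglyMeasurable
  rw [one_mul, Real.norm_of_nonneg (by positivity)]

end RadialPower

section HeatKernel

variable {n : ℕ} {s : ℝ}

theorem integral_exp_neg_norm_sq_div (hs : 0 < s) :
    ∫ z : EuclideanSpace ℝ (Fin n), rexp (-‖z‖ ^ 2 / (4 * s)) = (4 * π * s) ^ ((n : ℝ) / 2) := by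
  have h := GaussianFourier.integral_rexp_neg_mul_sq_norm
    (V := EuclideanSpace ℝ (Fin n)) (inv_pos.2 (by positivity : 0 < 4 * s))
  rw [finrank_euclideanSpace_fin] at h
  simp_rw [neg_mul, ← div_eq_inv_mul, ← neg_div] at h
  rw [h, div_inv_eq_mul, mul_comm π, mul_right_comm]

theorem integral_heatKernel_sub (hs : 0 < s) (x : EuclideanSpace ℝ (Fin n)) :
    ∫ y, heatKernel n (x - y) s = 1 := by
  simp only [heatKernel]
  rw [integral_const_mul, integral_sub_left_eq_self (fun z => rexp (-‖z‖ ^ 2 / (4 * s))),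
    integral_exp_neg_norm_sq_div hs, ← Real.rpow_add (by positivity), neg_div,
    neg_add_cancel, Real.rpow_zero]

theorem integrable_heatKernel_sub (hs : 0 < s) (x : EuclideanSpace ℝ (Fin n)) :
    Integrable fun y => heatKernel n (x - y) s :=
  Integrable.of_integral_ne_zero (by rw [integral_heatKernel_sub hs]; exact one_ne_zero)

theorem heatKernel_nonneg (hs : 0 < s) (x : EuclideanSpace ℝ (Fin n)) :
    0 ≤ heatKernel n x s := by
  unfold heatKernel; positivity

theorem heatKernel_le (hs : 0 < s) (x : EuclideanSpace ℝ (Fin n)) :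
    heatKernel n x s ≤ (4 * π * s) ^ (-(n : ℝ) / 2) := by
  unfold heatKernel
  refine mul_le_of_le_one_right (by positivity) (Real.exp_le_one_iff.2 ?_)
  rw [neg_div]
  exact neg_nonpos.2 (by positivity)

end HeatKernel

section PhiWeight

variable {n : ℕ} {σ t : ℝ} {x : EuclideanSpace ℝ (Fin n)}

theorem phiWeight_pos (hx : x ≠ 0) : 0 < phiWeight n σ x t := by
  unfold phiWeight
  split_ifs with h
  · have hx' := norm_pos_iff.2 hx
    exact Real.rpow_pos_of_pos (div_pos (hx'.trans_le h) hx') σ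
  · exact one_pos

theorem phiWeight_le_one (hσ : 0 ≤ σ) (hx : √t ≤ ‖x‖) : phiWeight n σ x t ≤ 1 := by
  unfold phiWeight
  split_ifs
  · exact Real.rpow_le_one (by positivity) (div_le_one_of_le₀ hx (norm_nonneg x)) hσ
  · exact le_rfl

theorem phiWeight_of_norm_le (ht : 0 ≤ t) (hx : ‖x‖ ≤ √t) :
    phiWeight n σ x t = t ^ (σ / 2) * ‖x‖ ^ (-σ) := by
  rw [phiWeight, if_pos hx, Real.div_rpow (Real.sqrt_nonneg t) (norm_nonneg x),
    Real.rpow_neg (norm_nonneg x), div_eq_mul_inv, Real.sqrt_eq_rpow, ← Real.rpow_mul ht]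
  ring_nf

end PhiWeight

noncomputable def weightedHeatMajorant (n : ℕ) (σ ℓ c t : ℝ) (x y : EuclideanSpace ℝ (Fin n)) :
    ℝ :=
  (ball 0 √t).indicator
      (fun y => t ^ (σ / 2) * (4 * π * (c * t)) ^ (-(n : ℝ) / 2) * ‖y‖ ^ (-(σ + ℓ))) y +
    t ^ (-ℓ / 2) * heatKernel n (x - y) (c * t)

section Majorant

variable {n : ℕ} {σ ℓ c t : ℝ}

theorem phiWeight_mul_rpow_mul_heatKernel_le (hσ : 0 ≤ σ) (hℓ : 0 ≤ ℓ) (hc : 0 < c) (ht : 0 < t)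
    (x : EuclideanSpace ℝ (Fin n)) {y : EuclideanSpace ℝ (Fin n)} (hy : y ≠ 0) :
    phiWeight n σ y t * ‖y‖ ^ (-ℓ) * heatKernel n (x - y) (c * t) ≤
      weightedHeatMajorant n σ ℓ c t x y := by
  have hct : 0 < c * t := mul_pos hc ht
  have hG := heatKernel_nonneg (n := n) hct (x - y)
  have hyn := norm_pos_iff.2 hy
  rw [weightedHeatMajorant]
  rcases lt_or_ge ‖y‖ √t with hlt | hge
  · have hpow : ‖y‖ ^ (-σ) * ‖y‖ ^ (-ℓ) = ‖y‖ ^ (-(σ + ℓ)) := by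
      rw [← Real.rpow_add hyn, neg_add]
    rw [Set.indicator_of_mem (mem_ball_zero_iff.2 hlt), phiWeight_of_norm_le ht.le hlt.le]
    refine le_add_of_le_of_nonneg ?_ (by positivity)
    calc _ = t ^ (σ / 2) * (‖y‖ ^ (-σ) * ‖y‖ ^ (-ℓ)) * heatKernel n (x - y) (c * t) := by ring
      _ = t ^ (σ / 2) * ‖y‖ ^ (-(σ + ℓ)) * heatKernel n (x - y) (c * t) := by rw [hpow]
      _ ≤ t ^ (σ / 2) * ‖y‖ ^ (-(σ + ℓ)) * (4 * π * (c * t)) ^ (-(n : ℝ) / 2) := by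
          gcongr; exact heatKernel_le hct _
      _ = _ := by ring
  · rw [Set.indicator_of_notMem (by simpa using hge), zero_add]
    have hyt : ‖y‖ ^ (-ℓ) ≤ t ^ (-ℓ / 2) := by
      calc ‖y‖ ^ (-ℓ) ≤ √t ^ (-ℓ) :=
            Real.rpow_le_rpow_of_nonpos (Real.sqrt_pos.2 ht) hge (neg_nonpos.2 hℓ)
        _ = t ^ (-ℓ / 2) := by rw [Real.sqrt_eq_rpow, ← Real.rpow_mul ht.le]; ring_nf
    gcongr
    calc phiWeight n σ y t * ‖y‖ ^ (-ℓ) ≤ 1 * t ^ (-ℓ / 2) :=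
          mul_le_mul (phiWeight_le_one hσ hge) hyt (by positivity) zero_le_one
      _ = t ^ (-ℓ / 2) := one_mul _

theorem integrable_indicator_ball_const_mul_norm_rpow_neg (hn : 0 < n) {a : ℝ} (ha : a < n)
    (R C : ℝ) : Integrable ((ball (0 : EuclideanSpace ℝ (Fin n)) R).indicator
      fun y => C * ‖y‖ ^ (-a)) :=
  IntegrableOn.integrable_indicator ((integrableOn_ball_norm_rpow_neg _
    (by rwa [finrank_euclideanSpace_fin]) (by rwa [finrank_euclideanSpace_fin]) R).const_mul C)
    measurableSet_ball

theorem integrable_weightedHeatMajorant (hn : 0 < n) (ha : σ + ℓ < n) (hc : 0 < c) (ht : 0 < t)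
    (x : EuclideanSpace ℝ (Fin n)) : Integrable (weightedHeatMajorant n σ ℓ c t x) :=
  (integrable_indicator_ball_const_mul_norm_rpow_neg hn ha _ _).add
    ((integrable_heatKernel_sub (mul_pos hc ht) x).const_mul _)

theorem integral_weightedHeatMajorant (hn : 0 < n) (ha : σ + ℓ < n) (hc : 0 < c) (ht : 0 < t)
    (x : EuclideanSpace ℝ (Fin n)) :
    ∫ y, weightedHeatMajorant n σ ℓ c t x y =
      t ^ (-ℓ / 2) * ((4 * π * c) ^ (-(n : ℝ) / 2) *
        (∫ y in ball (0 : EuclideanSpace ℝ (Fin n)) 1, ‖y‖ ^ (-(σ + ℓ))) + 1) := by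
  have hpow : t ^ (σ / 2) * t ^ (-(n : ℝ) / 2) * √t ^ ((n : ℝ) + -(σ + ℓ)) = t ^ (-ℓ / 2) := by
    rw [Real.sqrt_eq_rpow, ← Real.rpow_mul ht.le, ← Real.rpow_add ht, ← Real.rpow_add ht]
    ring_nf
  unfold weightedHeatMajorant
  rw [integral_add (integrable_indicator_ball_const_mul_norm_rpow_neg hn ha _ _)
      ((integrable_heatKernel_sub (mul_pos hc ht) x).const_mul _),
    integral_indicator measurableSet_ball, integral_const_mul, integral_const_mul,
    integral_heatKernel_sub (mul_pos hc ht), setIntegral_ball_norm_rpow _ (Real.sqrt_pos.2 ht),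
    finrank_euclideanSpace_fin, show 4 * π * (c * t) = 4 * π * c * t by ring,
    Real.mul_rpow (by positivity) ht.le, ← hpow]
  ring

end Majorant

theorem le_mul_norm_rpow_neg {E : Type*} [SeminormedAddCommGroup E] {f : E → ℝ} {α ℓ b : ℝ}
    (hb : 0 ≤ b) (hαℓ : α ≤ ℓ) (hsmall : ∀ x : E, 0 < ‖x‖ → ‖x‖ ≤ 1 → f x ≤ b * ‖x‖ ^ (-α))
    (hlarge : ∀ x : E, 1 ≤ ‖x‖ → f x ≤ b * ‖x‖ ^ (-ℓ)) {x : E} (hx : 0 < ‖x‖) :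
    f x ≤ b * ‖x‖ ^ (-ℓ) := by
  rcases le_total ‖x‖ 1 with h1 | h1
  · exact (hsmall x hx h1).trans (mul_le_mul_of_nonneg_left
      (Real.rpow_le_rpow_of_exponent_ge hx h1 (neg_le_neg hαℓ)) hb)
  · exact hlarge x h1

theorem integral_mul_le_integral_weightedHeatMajorant {n : ℕ} {σ ℓ c t A b : ℝ} (hn : 0 < n)
    (hσ : 0 ≤ σ) (hℓ : 0 ≤ ℓ) (ha : σ + ℓ < n) (hc : 0 < c) (ht : 0 < t) (hA : 0 ≤ A)
    (hb : 0 ≤ b) (x : EuclideanSpace ℝ (Fin n)) {k w : EuclideanSpace ℝ (Fin n) → ℝ}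
    (hk0 : ∀ y, 0 ≤ k y) (hw0 : ∀ y, 0 ≤ w y)
    (hk : ∀ y, y ≠ 0 → k y ≤ A * phiWeight n σ y t * heatKernel n (x - y) (c * t))
    (hw : ∀ y, y ≠ 0 → w y ≤ b * ‖y‖ ^ (-ℓ)) :
    ∫ y, k y * w y ≤ A * b * ∫ y, weightedHeatMajorant n σ ℓ c t x y := by
  have : Nontrivial (EuclideanSpace ℝ (Fin n)) :=
    Module.nontrivial_of_finrank_pos (R := ℝ) (by rwa [finrank_euclideanSpace_fin])
  have hpt : ∀ᵐ y, k y * w y ≤ A * b * weightedHeatMajorant n σ ℓ c t x y := by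
    filter_upwards [Measure.ae_ne volume 0] with y hy
    calc k y * w y
        ≤ (A * phiWeight n σ y t * heatKernel n (x - y) (c * t)) * (b * ‖y‖ ^ (-ℓ)) :=
          mul_le_mul (hk y hy) (hw y hy) (hw0 y) (mul_nonneg (mul_nonneg hA
            (phiWeight_pos hy).le) (heatKernel_nonneg (mul_pos hc ht) _))
      _ = A * b * (phiWeight n σ y t * ‖y‖ ^ (-ℓ) * heatKernel n (x - y) (c * t)) := by ring
      _ ≤ A * b * weightedHeatMajorant n σ ℓ c t x y := by
          gcongr
          exact phiWeight_mul_rpow_mul_heatKernel_le hσ hℓ hc ht x hy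
  rw [← integral_const_mul]
  exact integral_mono_of_nonneg (ae_of_all _ fun y => mul_nonneg (hk0 y) (hw0 y))
    ((integrable_weightedHeatMajorant hn ha hc ht x).const_mul _) hpt

theorem weighted_sup_decay_general (n : ℕ) (p σ : ℝ) (hp : 1 < p) (hσ : 0 < σ)
    (K : ℝ → EuclideanSpace ℝ (Fin n) → EuclideanSpace ℝ (Fin n) → ℝ)
    (C₀ c : ℝ) (hC₀ : 0 < C₀) (hc : 1 < c)
    (hK0 : ∀ t > (0 : ℝ), ∀ x y, 0 ≤ K t x y)
    (hK : ∀ t > (0 : ℝ), ∀ x y : EuclideanSpace ℝ (Fin n), x ≠ 0 → y ≠ 0 →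
      K t x y ≤ C₀ * phiWeight n σ x t * phiWeight n σ y t * heatKernel n (x - y) (c * t))
    (w₀ : EuclideanSpace ℝ (Fin n) → ℝ)
    (hw₀0 : ∀ x, 0 ≤ w₀ x)
    (b ℓ : ℝ) (hb : 0 < b) (hℓ : ℓ ∈ Set.Ioo (2 / (p - 1)) ((n : ℝ) - σ))
    (hsmall : ∀ x : EuclideanSpace ℝ (Fin n), 0 < ‖x‖ → ‖x‖ ≤ 1 →
      w₀ x ≤ b * ‖x‖ ^ (-(2 / (p - 1))))
    (hlarge : ∀ x : EuclideanSpace ℝ (Fin n), 1 ≤ ‖x‖ → w₀ x ≤ b * ‖x‖ ^ (-ℓ)) :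
    ∃ C > 0, ∀ t ≥ (1 : ℝ), ∀ x : EuclideanSpace ℝ (Fin n), x ≠ 0 →
      (phiWeight n σ x t)⁻¹ * ∫ y, K t x y * w₀ y ≤ C * t ^ (-ℓ / 2) := by
  obtain ⟨hℓp, hℓσ⟩ := hℓ
  have hℓ0 : 0 < ℓ := (div_pos two_pos (sub_pos.2 hp)).trans hℓp
  have ha : σ + ℓ < n := by linarith
  have hn : 0 < n := by exact_mod_cast (by linarith : (0 : ℝ) < n)
  have hc0 : 0 < c := one_pos.trans hc
  set M := (4 * π * c) ^ (-(n : ℝ) / 2) *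
    (∫ y in ball (0 : EuclideanSpace ℝ (Fin n)) 1, ‖y‖ ^ (-(σ + ℓ))) + 1
  have hM : 0 < M := by
    have : 0 ≤ ∫ y in ball (0 : EuclideanSpace ℝ (Fin n)) 1, ‖y‖ ^ (-(σ + ℓ)) :=
      setIntegral_nonneg measurableSet_ball fun y _ => by positivity
    positivity
  refine ⟨C₀ * b * M, by positivity, fun t ht x hx => ?_⟩
  have ht0 : 0 < t := one_pos.trans_le ht
  have hφx : 0 < phiWeight n σ x t := phiWeight_pos hx
  have hint := integral_mul_le_integral_weightedHeatMajorant hn hσ.le hℓ0.le ha hc0 ht0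
    (mul_nonneg hC₀.le hφx.le) hb.le x (hK0 t ht0 x) hw₀0 (fun y => hK t ht0 x y hx)
    (fun y hy => le_mul_norm_rpow_neg hb.le hℓp.le hsmall hlarge (norm_pos_iff.2 hy))
  rw [integral_weightedHeatMajorant hn ha hc0 ht0] at hint
  calc (phiWeight n σ x t)⁻¹ * ∫ y, K t x y * w₀ y
      ≤ (phiWeight n σ x t)⁻¹ * (C₀ * phiWeight n σ x t * b * (t ^ (-ℓ / 2) * M)) := by gcongr
    _ = C₀ * b * M * t ^ (-ℓ / 2) := by field_simp

/-- Weighted sup-bound for integral operators dominated by the Liskevich–Sobol /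
Milman–Semenov kernel estimate, applied to data `w₀` decaying like `|x|^{−2/(p−1)}`
near the origin and like `|x|^{−ℓ}` at infinity. -/
theorem weighted_sup_decay (n : ℕ) (hn : 3 ≤ n) (p σ : ℝ) (hp : 1 < p) (hσ : 0 < σ)
    (hσp : σ + 2 / (p - 1) < (n : ℝ))
    (K : ℝ → EuclideanSpace ℝ (Fin n) → EuclideanSpace ℝ (Fin n) → ℝ)
    (hKmeas : Measurable fun q : ℝ × EuclideanSpace ℝ (Fin n) × EuclideanSpace ℝ (Fin n) =>
      K q.1 q.2.1 q.2.2)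
    (C₀ c : ℝ) (hC₀ : 0 < C₀) (hc : 1 < c)
    (hK0 : ∀ t > (0 : ℝ), ∀ x y, 0 ≤ K t x y)
    (hK : ∀ t > (0 : ℝ), ∀ x y : EuclideanSpace ℝ (Fin n), x ≠ 0 → y ≠ 0 →
      K t x y ≤ C₀ * phiWeight n σ x t * phiWeight n σ y t * heatKernel n (x - y) (c * t))
    (w₀ : EuclideanSpace ℝ (Fin n) → ℝ) (hw₀meas : Measurable w₀)
    (hw₀0 : ∀ x, 0 ≤ w₀ x)
    (b ℓ : ℝ) (hb : 0 < b) (hℓ : ℓ ∈ Set.Ioo (2 / (p - 1)) ((n : ℝ) - σ))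
    (hsmall : ∀ x : EuclideanSpace ℝ (Fin n), 0 < ‖x‖ → ‖x‖ ≤ 1 →
      w₀ x ≤ b * ‖x‖ ^ (-(2 / (p - 1))))
    (hlarge : ∀ x : EuclideanSpace ℝ (Fin n), 1 ≤ ‖x‖ → w₀ x ≤ b * ‖x‖ ^ (-ℓ)) :
    ∃ C > 0, ∀ t ≥ (1 : ℝ), ∀ x : EuclideanSpace ℝ (Fin n), x ≠ 0 →
      (phiWeight n σ x t)⁻¹ * ∫ y, K t x y * w₀ y ≤ C * t ^ (-ℓ / 2) :=
  weighted_sup_decay_general n p σ hp hσ K C₀ c hC₀ hc hK0 hK w₀ hw₀0 b ℓ hb hℓ hsmall hlarge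
end

section
/- Let n ≥ 11 be an integer, p ≥ p_JL, and let σ = σ(n,p), L and v_∞ be as defined; note σ(p−1) − 2 > 0. Let ℓ ∈ (σ, n−σ) and A > 0. Suppose u : (ℝⁿ∖{0})×[1,∞) → ℝ satisfies u(x,t) ≥ v_∞(x) − A·φ_σ(x,t)·t^{−ℓ/2} for all x ∈ ℝⁿ∖{0} and all t ≥ 1. Then there exist constants C > 0 and T ≥ 1 such that for all t ≥ T, sup_{x ∈ ℝⁿ∖{0}} u(x,t) ≥ C·t^{(ℓ−σ)/(σ(p−1)−2)}. -/
open Real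

set_option maxHeartbeats 800000 in
/-- Grow-up lower bound: if `u(x,t) ≥ v_∞(x) − A·φ_σ(x,t)·t^{−ℓ/2}` for all `x ≠ 0`
and `t ≥ 1`, then `sup_x u(x,t) ≥ C·t^{(ℓ−σ)/(σ(p−1)−2)}` for large `t`. -/
theorem sup_lower_bound (n : ℕ) (hn : 11 ≤ n) (p : ℝ)
    (hp : ((n : ℝ) - 2 * Real.sqrt ((n : ℝ) - 1)) /
      ((n : ℝ) - 4 - 2 * Real.sqrt ((n : ℝ) - 1)) ≤ p)
    (σ L : ℝ)
    (hσ : σ = ((n : ℝ) - 2) / 2 -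
      Real.sqrt (((n : ℝ) - 2) ^ 2 / 4 - (2 * p / (p - 1)) * ((n : ℝ) - 2 - 2 / (p - 1))))
    (hL : L = ((2 / (p - 1)) * ((n : ℝ) - 2 - 2 / (p - 1))) ^ (1 / (p - 1)))
    (vinf : EuclideanSpace ℝ (Fin n) → ℝ)
    (hvinf : ∀ x : EuclideanSpace ℝ (Fin n), vinf x = L * ‖x‖ ^ (-(2 / (p - 1))))
    (ℓ A : ℝ) (hℓ : ℓ ∈ Set.Ioo σ ((n : ℝ) - σ)) (hA : 0 < A)
    (u : EuclideanSpace ℝ (Fin n) → ℝ → ℝ)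
    (hu : ∀ x : EuclideanSpace ℝ (Fin n), x ≠ 0 → ∀ t ≥ (1 : ℝ),
      vinf x - A * phiWeight n σ x t * t ^ (-ℓ / 2) ≤ u x t) :
    ∃ C > 0, ∃ T ≥ (1 : ℝ), ∀ t ≥ T, ∃ x : EuclideanSpace ℝ (Fin n), x ≠ 0 ∧
      C * t ^ ((ℓ - σ) / (σ * (p - 1) - 2)) ≤ u x t := by
  -- ## Step 1: basic consequences of `n ≥ 11` and `p ≥ p_JL`
  have hn' : (11 : ℝ) ≤ (n : ℝ) := by exact_mod_cast hn
  have hs0 : 0 ≤ Real.sqrt ((n : ℝ) - 1) := Real.sqrt_nonneg _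
  have hs2 : Real.sqrt ((n : ℝ) - 1) ^ 2 = (n : ℝ) - 1 := Real.sq_sqrt (by linarith)
  set s := Real.sqrt ((n : ℝ) - 1) with hs
  clear_value s
  have hd : 0 < (n : ℝ) - 4 - 2 * s := by
    have h9 : (0:ℝ) ≤ ((n:ℝ) - 11) * ((n:ℝ) - 1) :=
      mul_nonneg (by linarith) (by linarith)
    have : s < ((n : ℝ) - 4) / 2 := by
      rw [hs, Real.sqrt_lt' (by linarith)]
      nlinarith [h9]
    linarith
  have hp1 : 4 / ((n : ℝ) - 4 - 2 * s) ≤ p - 1 := by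
    rw [div_le_iff₀ hd] at hp ⊢
    linarith
  have hp0 : 0 < p - 1 := lt_of_lt_of_le (div_pos (by norm_num) hd) hp1
  set m := 2 / (p - 1) with hm
  clear_value m
  have hm0 : 0 < m := by rw [hm]; positivity
  have hmd : m ≤ ((n : ℝ) - 4 - 2 * s) / 2 := by
    rw [hm, div_le_div_iff₀ hp0 (by norm_num)]
    rw [div_le_iff₀ hd] at hp1
    linarith
  have hmlt : m < ((n : ℝ) - 2) / 2 := by linarith
  have hq : (2 + m) * ((n : ℝ) - 2 - m) ≤ ((n : ℝ) - 2) ^ 2 / 4 := by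
    have h1 : 0 ≤ ((n : ℝ) - 4 - 2 * s) / 2 - m := by linarith
    have h2 : 0 ≤ ((n : ℝ) - 4 + 2 * s) / 2 - m := by linarith
    nlinarith [mul_nonneg h1 h2, hs2]
  have h2p : 2 * p / (p - 1) = 2 + m := by
    rw [hm]; field_simp; ring
  have hσ' : σ = ((n : ℝ) - 2) / 2 -
      Real.sqrt (((n : ℝ) - 2) ^ 2 / 4 - (2 + m) * ((n : ℝ) - 2 - m)) := by
    rw [hσ, h2p]
  have hσm : m < σ := by
    have hsqlt : Real.sqrt (((n : ℝ) - 2) ^ 2 / 4 - (2 + m) * ((n : ℝ) - 2 - m)) <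
        ((n : ℝ) - 2) / 2 - m := by
      rw [Real.sqrt_lt' (by linarith)]
      nlinarith [hmlt, hn']
    rw [hσ']; linarith
  have hσ0 : 0 < σ := lt_trans hm0 hσm
  -- `k = σ(p-1) - 2 > 0`
  have hmk : m * (p - 1) = 2 := by rw [hm]; field_simp
  have hk : 0 < σ * (p - 1) - 2 := by linarith [mul_lt_mul_of_pos_right hσm hp0]
  set k := σ * (p - 1) - 2 with hkdef
  clear_value k
  have hkne : k ≠ 0 := ne_of_gt hk
  have hpne : p - 1 ≠ 0 := ne_of_gt hp0
  -- `L > 0`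
  have hL0 : 0 < L := by
    rw [hL]
    exact Real.rpow_pos_of_pos (mul_pos hm0 (by linarith)) _
  have hℓσ : σ < ℓ := hℓ.1
  -- ## Step 2: choice of constants
  set mm := (ℓ - σ) * (p - 1) / (2 * k) with hmm
  clear_value mm
  have hmm0 : 0 < mm := by
    rw [hmm]
    exact div_pos (mul_pos (by linarith) hp0) (by linarith)
  set ε := max 1 ((2 * A / L) ^ ((p - 1) / k)) with hε
  clear_value ε
  have hε1 : (1 : ℝ) ≤ ε := by rw [hε]; exact le_max_left _ _
  have hε0 : 0 < ε := lt_of_lt_of_le one_pos hε1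
  have hεk : 2 * A / L ≤ ε ^ (k / (p - 1)) := by
    have hbase : (0 : ℝ) ≤ 2 * A / L := by positivity
    calc 2 * A / L = ((2 * A / L) ^ ((p - 1) / k)) ^ (k / (p - 1)) := by
          rw [← Real.rpow_mul hbase]
          rw [show (p - 1) / k * (k / (p - 1)) = 1 by field_simp, Real.rpow_one]
      _ ≤ ε ^ (k / (p - 1)) :=
          Real.rpow_le_rpow (Real.rpow_nonneg hbase _) (by rw [hε]; exact le_max_right _ _) (by positivity)
  -- the key smallness inequality
  have hkey : A * ε ^ (-σ) ≤ L / 2 * ε ^ (-(2 / (p - 1))) := by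
    have id3 : -(2 / (p - 1)) = -σ + k / (p - 1) := by
      rw [hkdef]; field_simp; ring
    rw [id3, Real.rpow_add hε0]
    have h1 : (L / 2 * ε ^ (-σ)) * (2 * A / L) ≤ (L / 2 * ε ^ (-σ)) * ε ^ (k / (p - 1)) := by
      apply mul_le_mul_of_nonneg_left hεk
      positivity
    have h2 : (L / 2 * ε ^ (-σ)) * (2 * A / L) = A * ε ^ (-σ) := by
      field_simp
    rw [h2] at h1
    refine le_trans h1 (le_of_eq ?_)
    ring
  set C := L / 2 * ε ^ (-(2 / (p - 1))) with hC
  clear_value C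
  have hC0 : 0 < C := by rw [hC]; exact mul_pos (by linarith) (Real.rpow_pos_of_pos hε0 _)
  refine ⟨C, hC0, max 1 (ε ^ 2), le_max_left _ _, fun t ht => ?_⟩
  have ht1 : (1 : ℝ) ≤ t := le_trans (le_max_left _ _) ht
  have htε : ε ^ 2 ≤ t := le_trans (le_max_right _ _) ht
  have ht0 : 0 < t := lt_of_lt_of_le one_pos ht1
  -- the chosen point
  set r := ε * t ^ (-mm) with hr
  clear_value r
  have hr0 : 0 < r := by rw [hr]; exact mul_pos hε0 (Real.rpow_pos_of_pos ht0 _)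
  have hrs : r ≤ Real.sqrt t := by
    have h1 : t ^ (-mm) ≤ 1 := Real.rpow_le_one_of_one_le_of_nonpos ht1 (by linarith)
    have h2 : r ≤ ε := by
      calc r = ε * t ^ (-mm) := hr
        _ ≤ ε * 1 := by apply mul_le_mul_of_nonneg_left h1 hε0.le
        _ = ε := mul_one ε
    have h3 : ε ≤ Real.sqrt t := by
      calc ε = Real.sqrt (ε ^ 2) := (Real.sqrt_sq hε0.le).symm
        _ ≤ Real.sqrt t := Real.sqrt_le_sqrt htε
    linarith
  obtain ⟨i, hi⟩ : ∃ i : Fin n, True := ⟨⟨0, by omega⟩, trivial⟩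
  refine ⟨EuclideanSpace.single i r, ?_, ?_⟩
  · intro h
    have := congrArg norm h
    rw [EuclideanSpace.norm_single, norm_zero, Real.norm_eq_abs, abs_of_pos hr0] at this
    linarith
  set x := EuclideanSpace.single i r with hx
  clear_value x
  have hxnorm : ‖x‖ = r := by
    rw [hx, EuclideanSpace.norm_single, Real.norm_eq_abs, abs_of_pos hr0]
  have hx0 : x ≠ 0 := by
    intro h
    rw [h, norm_zero] at hxnorm
    linarith
  -- the lower bound from the hypothesis
  have hub := hu x hx0 t ht1
  have hφ : phiWeight n σ x t = (Real.sqrt t / r) ^ σ := by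
    rw [phiWeight, hxnorm, if_pos hrs]
  -- exponent bookkeeping
  set α := (ℓ - σ) / k with hα
  clear_value α
  have id1 : -mm * -(2 / (p - 1)) = α := by
    rw [hmm, hα]; field_simp
  have id2 : (1 / 2 + mm) * σ + -ℓ / 2 = α := by
    rw [hmm, hα]
    field_simp
    rw [hkdef]
    ring
  -- rewrite `v_∞(x)`
  have eq1 : vinf x = L * ε ^ (-(2 / (p - 1))) * t ^ α := by
    rw [hvinf x, hxnorm, hr, Real.mul_rpow hε0.le (Real.rpow_nonneg ht0.le _),
      ← Real.rpow_mul ht0.le, hm, id1, mul_assoc]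
  -- rewrite the weight term
  have eq2 : A * (Real.sqrt t / r) ^ σ * t ^ (-ℓ / 2) = A * ε ^ (-σ) * t ^ α := by
    have hdiv : Real.sqrt t / r = ε⁻¹ * t ^ ((1 : ℝ) / 2 + mm) := by
      rw [Real.sqrt_eq_rpow, hr]
      rw [show (1 : ℝ) / 2 + mm = 1 / 2 - (-mm) by ring, Real.rpow_sub ht0]
      field_simp
    rw [hdiv, Real.mul_rpow (by positivity) (Real.rpow_nonneg ht0.le _),
      ← Real.rpow_mul ht0.le, Real.inv_rpow hε0.le, ← Real.rpow_neg hε0.le,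
      mul_assoc, mul_assoc, ← Real.rpow_add ht0, id2]
    ring
  rw [hφ] at hub
  rw [eq1, eq2] at hub
  -- conclude
  have hfin : C * t ^ α ≤ L * ε ^ (-(2 / (p - 1))) * t ^ α - A * ε ^ (-σ) * t ^ α := by
    have htα : 0 < t ^ α := Real.rpow_pos_of_pos ht0 _
    have hkey' := mul_le_mul_of_nonneg_right hkey htα.le
    rw [hC] at hkey'
    rw [hC]
    linarith [hkey']
  exact le_trans hfin hub
end

section
/- Let n ≥ 11 be an integer, p ≥ p_JL, and let σ = σ(n,p), L and v_∞ be as defined; note σ(p−1) − 2 > 0. Suppose u : (ℝⁿ∖{0})×(0,∞) → ℝ satisfies: for every ε > 0 there exists T > 0 such that u(x,t) ≥ v_∞(x) − ε·φ_σ(x,t)·t^{−σ/2} for all x ∈ ℝⁿ∖{0} and all t ≥ T. Then sup_{x ∈ ℝⁿ∖{0}} u(x,t) → ∞ as t → ∞. -/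
/-!
Fix a radius `r`. Where `|x| = r ≤ √t` the error term is `ε φ_σ(x,t) t^{-σ/2} = ε r^{-σ}`,
whatever `t` is, so the choice `ε = r^σ` gives `u(x,t) ≥ v_∞(x) - 1 = L r^{-2/(p-1)} - 1` for all
large `t`. Since `p > 1` and `L > 0`, this is as large as we like once `r` is small.
-/

open Real

/-- The Joseph–Lundgren exponent `p_JL`. -/
noncomputable def pJL (n : ℝ) : ℝ :=
  (n - 2 * √(n - 1)) / (n - 4 - 2 * √(n - 1))

/-- Because `(n - 4)² - 4 (n - 1) = (n - 2) (n - 10)`. -/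
lemma two_mul_sqrt_sub_one_lt {n : ℝ} (hn : 10 < n) : 2 * √(n - 1) < n - 4 := by
  have hsq : √(n - 1) ^ 2 = n - 1 := sq_sqrt (by linarith)
  nlinarith [sqrt_nonneg (n - 1)]

lemma pJL_eq_one_add {n : ℝ} (hn : 10 < n) :
    pJL n = 1 + 4 / (n - 4 - 2 * √(n - 1)) := by
  have hden : n - 4 - 2 * √(n - 1) ≠ 0 := by linarith [two_mul_sqrt_sub_one_lt hn]
  rw [pJL]
  field_simp
  ring

lemma one_lt_of_pJL_le {n p : ℝ} (hn : 10 < n) (hp : pJL n ≤ p) : 1 < p := by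
  have hden : 0 < n - 4 - 2 * √(n - 1) := by linarith [two_mul_sqrt_sub_one_lt hn]
  have : 0 < 4 / (n - 4 - 2 * √(n - 1)) := by positivity
  rw [pJL_eq_one_add hn] at hp
  linarith

lemma two_div_sub_one_lt_of_pJL_le {n p : ℝ} (hn : 10 < n) (hp : pJL n ≤ p) :
    2 / (p - 1) < n - 2 := by
  have hden : 0 < n - 4 - 2 * √(n - 1) := by linarith [two_mul_sqrt_sub_one_lt hn]
  have hp1 : 0 < p - 1 := by linarith [one_lt_of_pJL_le hn hp]
  rw [pJL_eq_one_add hn, ← le_sub_iff_add_le', div_le_iff₀ hden] at hp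
  rw [div_lt_iff₀ hp1]
  nlinarith [sqrt_nonneg (n - 1)]

lemma exists_mul_rpow_neg_eq {L a K : ℝ} (hL : 0 < L) (ha : 0 < a) (hK : 0 < K) :
    ∃ r > 0, L * r ^ (-a) = K := by
  refine ⟨(L / K) ^ a⁻¹, by positivity, ?_⟩
  rw [← rpow_mul (by positivity), inv_mul_eq_div, neg_div, div_self ha.ne', rpow_neg_one,
    inv_div, mul_div_cancel₀ _ hL.ne']

lemma phiWeight_mul_rpow_neg_half {n : ℕ} {σ t : ℝ} {x : EuclideanSpace ℝ (Fin n)}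
    (hx : x ≠ 0) (hxt : ‖x‖ ≤ √t) :
    phiWeight n σ x t * t ^ (-σ / 2) = ‖x‖ ^ (-σ) := by
  have ht : 0 < t := sqrt_pos.mp ((norm_pos_iff.mpr hx).trans_le hxt)
  rw [phiWeight, if_pos hxt, div_rpow (sqrt_nonneg t) (norm_nonneg x), sqrt_eq_rpow,
    ← rpow_mul ht.le, rpow_neg (norm_nonneg x), div_mul_eq_mul_div, ← rpow_add ht]
  ring_nf
  rw [rpow_zero, one_mul]

theorem sup_tendsto_atTop_general (n : ℕ) (hn : 11 ≤ n) (p : ℝ)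
    (hp : ((n : ℝ) - 2 * Real.sqrt ((n : ℝ) - 1)) /
      ((n : ℝ) - 4 - 2 * Real.sqrt ((n : ℝ) - 1)) ≤ p)
    (σ L : ℝ)
    (hL : L = ((2 / (p - 1)) * ((n : ℝ) - 2 - 2 / (p - 1))) ^ (1 / (p - 1)))
    (vinf : EuclideanSpace ℝ (Fin n) → ℝ)
    (hvinf : ∀ x : EuclideanSpace ℝ (Fin n), vinf x = L * ‖x‖ ^ (-(2 / (p - 1))))
    (u : EuclideanSpace ℝ (Fin n) → ℝ → ℝ)
    (hu : ∀ ε > (0 : ℝ), ∃ T > (0 : ℝ), ∀ x : EuclideanSpace ℝ (Fin n), x ≠ 0 → ∀ t ≥ T,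
      vinf x - ε * phiWeight n σ x t * t ^ (-σ / 2) ≤ u x t) :
    ∀ M : ℝ, ∃ T > (0 : ℝ), ∀ t ≥ T, ∃ x : EuclideanSpace ℝ (Fin n), x ≠ 0 ∧
      M ≤ u x t := by
  intro M
  have hn10 : (10 : ℝ) < n := by exact_mod_cast hn
  have hp1 : 0 < p - 1 := sub_pos.mpr (one_lt_of_pJL_le hn10 hp)
  have hL0 : 0 < L := hL ▸ rpow_pos_of_pos (mul_pos (div_pos two_pos hp1)
    (by linarith [two_div_sub_one_lt_of_pJL_le hn10 hp])) _
  obtain ⟨r, hr, hvr⟩ := exists_mul_rpow_neg_eq hL0 (div_pos two_pos hp1)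
    (by positivity : (0 : ℝ) < |M| + 1)
  have : NeZero n := ⟨by omega⟩
  obtain ⟨x, hxr⟩ := exists_norm_eq (EuclideanSpace ℝ (Fin n)) hr.le
  have hx : x ≠ 0 := norm_pos_iff.mp (hxr ▸ hr)
  obtain ⟨T, hT, hTu⟩ := hu (r ^ σ) (rpow_pos_of_pos hr σ)
  refine ⟨max T (r ^ 2), lt_max_of_lt_left hT, fun t ht => ⟨x, hx, ?_⟩⟩
  have hxt : ‖x‖ ≤ √t := hxr ▸ le_sqrt_of_sq_le (le_of_max_le_right ht)
  have hlow := hTu x hx t (le_of_max_le_left ht)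
  rw [mul_assoc, phiWeight_mul_rpow_neg_half hx hxt, hvinf, hxr, hvr,
    rpow_neg hr.le, mul_inv_cancel₀ (rpow_pos_of_pos hr σ).ne'] at hlow
  linarith [le_abs_self M]

/-- Grow-up: if for every `ε > 0` eventually `u(x,t) ≥ v_∞(x) − ε·φ_σ(x,t)·t^{−σ/2}`,
then `sup_x u(x,t) → ∞` as `t → ∞`. -/
theorem sup_tendsto_atTop (n : ℕ) (hn : 11 ≤ n) (p : ℝ)
    (hp : ((n : ℝ) - 2 * Real.sqrt ((n : ℝ) - 1)) /
      ((n : ℝ) - 4 - 2 * Real.sqrt ((n : ℝ) - 1)) ≤ p)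
    (σ L : ℝ)
    (hσ : σ = ((n : ℝ) - 2) / 2 -
      Real.sqrt (((n : ℝ) - 2) ^ 2 / 4 - (2 * p / (p - 1)) * ((n : ℝ) - 2 - 2 / (p - 1))))
    (hL : L = ((2 / (p - 1)) * ((n : ℝ) - 2 - 2 / (p - 1))) ^ (1 / (p - 1)))
    (vinf : EuclideanSpace ℝ (Fin n) → ℝ)
    (hvinf : ∀ x : EuclideanSpace ℝ (Fin n), vinf x = L * ‖x‖ ^ (-(2 / (p - 1))))
    (u : EuclideanSpace ℝ (Fin n) → ℝ → ℝ)
    (hu : ∀ ε > (0 : ℝ), ∃ T > (0 : ℝ), ∀ x : EuclideanSpace ℝ (Fin n), x ≠ 0 → ∀ t ≥ T,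
      vinf x - ε * phiWeight n σ x t * t ^ (-σ / 2) ≤ u x t) :
    ∀ M : ℝ, ∃ T > (0 : ℝ), ∀ t ≥ T, ∃ x : EuclideanSpace ℝ (Fin n), x ≠ 0 ∧
      M ≤ u x t :=
  sup_tendsto_atTop_general n hn p hp σ L hL vinf hvinf u hu
end
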